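/- Assume (A1) and (A2)(a), and suppose c is not constant on 𝒦. Let ρ ≥ 0 and ψ* : S → (0,∞) with ψ* ∈ 𝒪(𝒱) satisfy e^{ρ} ψ*(i) = min_{u∈𝕌(i)} [ e^{c(i,u)} Σ_{j∈S} ψ*(j) P(j|i,u) ] for all i ∈ S, together with the stochastic representation ψ*(i) = E_i^{v*}[ e^{Σ_{t=0}^{τ̆(B)−1}(c(X_t,v*(X_t)) − ρ)} ψ*(X_{τ̆(B)}) ] for all i outside some finite set B ⊇ K and for any minimizing selector v* of the eigen-equation. Then ρ < ‖c‖_∞. -/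

import Mathlib

/-!
Discrete-time controlled Markov chains on the countable state space `S = ℕ`,
with Borel action space `U`, admissible action sets `𝕌 i ⊆ U`, controlled
transition probabilities `P i u j = P(j | i, u)` (valued in `ℝ≥0∞`) and running
cost `c i u = c(i,u)`.

Since admissible policies are deterministic measurable functions of the
history, and the actions appearing in a history are themselves determined by
the past states, an admissible policy is faithfully represented by a family of
maps of state-prefixes `ζ t : (Fin (t+1) → ℕ) → U`; measurability in the
history is automatic because state prefixes form a countable discrete space.
The trajectory law `P_i^ζ` is uniquely determined by its cylinder
probabilities, which are given explicitly by `pathWeight`; accordingly,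
expectations of path functionals are given by explicit (countable) sums.
-/

open Filter Set
open scoped ENNReal NNReal Topology Classical

namespace RSDT

variable {U : Type*}

/-- The action chosen at time `t` under policy `ζ` along the state path `x`. -/
def act (ζ : ∀ t : ℕ, (Fin (t + 1) → ℕ) → U) (x : ℕ → ℕ) (t : ℕ) : U :=
  ζ t fun s : Fin (t + 1) => x s.val

/-- Admissibility of a policy: all chosen actions lie in the admissible sets. -/
def IsAdmissible (𝕌 : ℕ → Set U) (ζ : ∀ t : ℕ, (Fin (t + 1) → ℕ) → U) : Prop :=
  ∀ (t : ℕ) (h : Fin (t + 1) → ℕ), ζ t h ∈ 𝕌 (h (Fin.last t))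

/-- The stationary Markov policy attached to `v : S → U`. -/
def smPolicy (v : ℕ → U) : ∀ t : ℕ, (Fin (t + 1) → ℕ) → U :=
  fun t h => v (h (Fin.last t))

/-- The (time-dependent) Markov policy attached to `v : ℕ → S → U`. -/
def mPolicy (v : ℕ → ℕ → U) : ∀ t : ℕ, (Fin (t + 1) → ℕ) → U :=
  fun t h => v t (h (Fin.last t))

/-- `v : S → U` is a stationary Markov selector for the action sets `𝕌`. -/
def IsSM (𝕌 : ℕ → Set U) (v : ℕ → U) : Prop := ∀ i, v i ∈ 𝕌 i

/-- Probability, under the trajectory law `P_i^ζ`, that the chain follows the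
path `x` during its first `T` steps. -/
noncomputable def pathWeight (P : ℕ → U → ℕ → ℝ≥0∞)
    (ζ : ∀ t : ℕ, (Fin (t + 1) → ℕ) → U) (i T : ℕ) (x : ℕ → ℕ) : ℝ≥0∞ :=
  (if x 0 = i then 1 else 0) * ∏ t ∈ Finset.range T, P (x t) (act ζ x t) (x (t + 1))

/-- Extension of a finite path to an infinite one (freezing the last state). -/
def extN (T : ℕ) (x : Fin (T + 1) → ℕ) : ℕ → ℕ :=
  fun n => x ⟨min n T, Nat.lt_succ_of_le (min_le_right n T)⟩

/-- `E_i^ζ [F(X_0, …, X_T)]` for a nonnegative functional `F` of the first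
`T + 1` states. -/
noncomputable def pathExp (P : ℕ → U → ℕ → ℝ≥0∞)
    (ζ : ∀ t : ℕ, (Fin (t + 1) → ℕ) → U) (i T : ℕ) (F : (ℕ → ℕ) → ℝ≥0∞) : ℝ≥0∞ :=
  ∑' x : Fin (T + 1) → ℕ, pathWeight P ζ i T (extN T x) * F (extN T x)

/-- The ergodic risk-sensitive cost
`𝓔_i(c,ζ) = limsup_{T→∞} (1/T) log E_i^ζ [exp (∑_{t<T} c(X_t, ζ_t))]`. -/
noncomputable def ergCost (P : ℕ → U → ℕ → ℝ≥0∞) (c : ℕ → U → ℝ)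
    (ζ : ∀ t : ℕ, (Fin (t + 1) → ℕ) → U) (i : ℕ) : EReal :=
  Filter.limsup
    (fun T : ℕ => (((T : ℝ)⁻¹ : ℝ) : EReal) *
      ENNReal.log (pathExp P ζ i T fun x =>
        ENNReal.ofReal (Real.exp (∑ t ∈ Finset.range T, c (x t) (act ζ x t)))))
    Filter.atTop

/-- The optimal value `λ* = inf_{i ∈ S} inf_{ζ ∈ 𝔘} 𝓔_i(c,ζ)`. -/
noncomputable def lamStar (P : ℕ → U → ℕ → ℝ≥0∞) (c : ℕ → U → ℝ) (𝕌 : ℕ → Set U) : EReal :=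
  ⨅ (i : ℕ) (ζ : {ζ : ∀ t : ℕ, (Fin (t + 1) → ℕ) → U // IsAdmissible 𝕌 ζ}),
    ergCost P c ζ.1 i

/-- `E_i^ζ [ G(τ̆(B), X) ; τ̆(B) < ∞ ]`, where `τ̆(B) = inf {t > 0 : X_t ∈ B}`
is the first hitting time of `B`. -/
noncomputable def hitExp (P : ℕ → U → ℕ → ℝ≥0∞)
    (ζ : ∀ t : ℕ, (Fin (t + 1) → ℕ) → U) (i : ℕ) (B : Set ℕ)
    (G : ℕ → (ℕ → ℕ) → ℝ≥0∞) : ℝ≥0∞ :=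
  ∑' (m : ℕ) (x : Fin (m + 1 + 1) → ℕ),
    if extN (m + 1) x (m + 1) ∈ B ∧ ∀ t, 0 < t → t < m + 1 → extN (m + 1) x t ∉ B then
      pathWeight P ζ i (m + 1) (extN (m + 1) x) * G (m + 1) (extN (m + 1) x)
    else 0

/-- `P_i^ζ (τ̆(B) < ∞)`. -/
noncomputable def hitProb (P : ℕ → U → ℕ → ℝ≥0∞)
    (ζ : ∀ t : ℕ, (Fin (t + 1) → ℕ) → U) (i : ℕ) (B : Set ℕ) : ℝ≥0∞ :=
  hitExp P ζ i B fun _ _ => 1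

/-- Recurrence under a stationary Markov policy: from every state, every state
is hit with probability one. -/
def Recurrent (P : ℕ → U → ℕ → ℝ≥0∞) (v : ℕ → U) : Prop :=
  ∀ i j : ℕ, hitProb P (smPolicy v) i {j} = 1

/-- Irreducibility under a stationary Markov policy. -/
def Irreducible (P : ℕ → U → ℕ → ℝ≥0∞) (v : ℕ → U) : Prop :=
  ∀ i j : ℕ, i ≠ j → ∃ n : ℕ, 0 < n ∧ ∃ x : ℕ → ℕ, x 0 = i ∧ x n = j ∧
    ∀ t < n, 0 < P (x t) (v (x t)) (x (t + 1))

/-- A function on the state space is norm-like (inf-compact) if all its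
sublevel sets are finite (or empty). -/
def NormLike (g : ℕ → ℝ) : Prop := ∀ κ : ℝ, {i | g i ≤ κ}.Finite

/-- `max_{u ∈ 𝕌(i)} c(i, u)`. -/
noncomputable def maxCost (c : ℕ → U → ℝ) (𝕌 : ℕ → Set U) (i : ℕ) : ℝ :=
  sSup ((fun u => c i u) '' 𝕌 i)

/-- `‖c‖_∞ = sup_{i ∈ S} sup_{u ∈ 𝕌(i)} c(i,u)`. -/
noncomputable def supCost (c : ℕ → U → ℝ) (𝕌 : ℕ → Set U) : ℝ :=
  sSup {r : ℝ | ∃ i, ∃ u ∈ 𝕌 i, c i u = r}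

/-- The one-step minimized operator
`ψ ↦ min_{u ∈ 𝕌(i)} e^{c(i,u)} ∑_{j ∈ S} ψ(j) P(j|i,u)`. -/
noncomputable def minOp (P : ℕ → U → ℕ → ℝ≥0∞) (c : ℕ → U → ℝ)
    (𝕌 : ℕ → Set U) (ψ : ℕ → ℝ≥0∞) (i : ℕ) : ℝ≥0∞ :=
  ⨅ u : 𝕌 i, ENNReal.ofReal (Real.exp (c i u.1)) * ∑' j, ψ j * P i u.1 j

/-- Structural standing assumptions on the discrete-time control model. -/
structure Model [TopologicalSpace U] [MeasurableSpace U]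
    (P : ℕ → U → ℕ → ℝ≥0∞) (c : ℕ → U → ℝ) (𝕌 : ℕ → Set U) : Prop where
  nonempty : ∀ i, (𝕌 i).Nonempty
  compact : ∀ i, IsCompact (𝕌 i)
  prob : ∀ i, ∀ u ∈ 𝕌 i, ∑' j, P i u j = 1
  measP : ∀ i j, Measurable fun u => P i u j

/-- Assumption (A1)(a): continuity in the action variable. -/
structure A1a [TopologicalSpace U] (P : ℕ → U → ℕ → ℝ≥0∞) (c : ℕ → U → ℝ)
    (𝕌 : ℕ → Set U) : Prop where
  cCont : ∀ i, ContinuousOn (fun u => c i u) (𝕌 i)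
  PCont : ∀ (i : ℕ) (f : ℕ → ℝ), (∃ M, ∀ j, |f j| ≤ M) →
    ContinuousOn (fun u => ∑' j, f j * (P i u j).toReal) (𝕌 i)

/-- Assumption (A1)(b): from the reference state `i₀` every other state is
reached in one step with positive probability. -/
def A1b (P : ℕ → U → ℕ → ℝ≥0∞) (𝕌 : ℕ → Set U) (i₀ : ℕ) : Prop :=
  ∀ j ≠ i₀, ∀ u ∈ 𝕌 i₀, 0 < P i₀ u j

/-- Foster–Lyapunov condition (A2)(a). -/
structure A2a (P : ℕ → U → ℕ → ℝ≥0∞) (c : ℕ → U → ℝ) (𝕌 : ℕ → Set U)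
    (V : ℕ → ℝ≥0∞) (K : Finset ℕ) (Chat : ℝ≥0∞) (β : ℝ) : Prop where
  betaPos : 0 < β
  betaLtOne : β < 1
  ChatPos : 0 < Chat
  ChatFin : Chat ≠ ∞
  Vone : ∀ i, 1 ≤ V i
  Vfin : ∀ i, V i ≠ ∞
  lyap : ∀ i, ∀ u ∈ 𝕌 i,
    ∑' j, V j * P i u j ≤ ENNReal.ofReal (1 - β) * V i + (if i ∈ K then Chat else 0)
  cBdd : ∃ M : ℝ, M < Real.log (1 / (1 - β)) ∧ ∀ i, ∀ u ∈ 𝕌 i, c i u ≤ M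

/-- Foster–Lyapunov condition (A2)(b). -/
structure A2b (P : ℕ → U → ℕ → ℝ≥0∞) (c : ℕ → U → ℝ) (𝕌 : ℕ → Set U)
    (V : ℕ → ℝ≥0∞) (K : Finset ℕ) (Chat : ℝ≥0∞) (ℓ : ℕ → ℝ) : Prop where
  ChatPos : 0 < Chat
  ChatFin : Chat ≠ ∞
  Vone : ∀ i, 1 ≤ V i
  Vfin : ∀ i, V i ≠ ∞
  ellNonneg : ∀ i, 0 ≤ ℓ i
  ellNormLike : NormLike ℓ
  lyap : ∀ i, ∀ u ∈ 𝕌 i,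
    ∑' j, V j * P i u j ≤ (if i ∈ K then Chat else 0) + ENNReal.ofReal (Real.exp (-ℓ i)) * V i
  gap : NormLike fun i => ℓ i - maxCost c 𝕌 i

/-- Assumption (A2): irreducibility under every stationary Markov policy plus
one of the two Foster–Lyapunov drift conditions. -/
def A2 (P : ℕ → U → ℕ → ℝ≥0∞) (c : ℕ → U → ℝ) (𝕌 : ℕ → Set U) : Prop :=
  (∀ v : ℕ → U, IsSM 𝕌 v → Irreducible P v) ∧
  ∃ (V : ℕ → ℝ≥0∞) (K : Finset ℕ) (Chat : ℝ≥0∞),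
    (∃ β : ℝ, A2a P c 𝕌 V K Chat β) ∨ ∃ ℓ : ℕ → ℝ, A2b P c 𝕌 V K Chat ℓ

end RSDT

namespace RSDT

-- Markov weight
noncomputable def mw (P : ℕ → U → ℕ → ℝ≥0∞) (v : ℕ → U) (i T : ℕ) (y : ℕ → ℕ) : ℝ≥0∞ :=
  (if y 0 = i then 1 else 0) * ∏ t ∈ Finset.range T, P (y t) (v (y t)) (y (t + 1))

lemma act_sm (v : ℕ → U) (x : ℕ → ℕ) (t : ℕ) : act (smPolicy v) x t = v (x t) := rfl

lemma pathWeight_sm (P : ℕ → U → ℕ → ℝ≥0∞) (v : ℕ → U) (i T : ℕ) (y : ℕ → ℕ) :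
    pathWeight P (smPolicy v) i T y = mw P v i T y := rfl

lemma extN_eq_of_le (T : ℕ) (x : Fin (T + 1) → ℕ) {n : ℕ} (h : n ≤ T) :
    extN T x n = x ⟨n, Nat.lt_succ_of_le h⟩ := by
  simp [extN, Nat.min_eq_left h]

lemma extN_snoc_front (T : ℕ) (x : Fin (T + 1) → ℕ) (j : ℕ) {n : ℕ} (h : n ≤ T) :
    extN (T + 1) (Fin.snoc x j) n = extN T x n := by
  rw [extN_eq_of_le (T + 1) _ (le_trans h (Nat.le_succ T)), extN_eq_of_le T x h]
  have : (⟨n, Nat.lt_succ_of_le (le_trans h (Nat.le_succ T))⟩ : Fin (T + 2))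
      = Fin.castSucc ⟨n, Nat.lt_succ_of_le h⟩ := rfl
  rw [this, Fin.snoc_castSucc]

lemma extN_snoc_last (T : ℕ) (x : Fin (T + 1) → ℕ) (j : ℕ) :
    extN (T + 1) (Fin.snoc x j) (T + 1) = j := by
  rw [extN_eq_of_le (T + 1) _ le_rfl]
  have : (⟨T + 1, Nat.lt_succ_of_le le_rfl⟩ : Fin (T + 2)) = Fin.last (T + 1) := rfl
  rw [this, Fin.snoc_last]

lemma extN_init (T : ℕ) (z : Fin (T + 2) → ℕ) {n : ℕ} (h : n ≤ T) :
    extN T (Fin.init z) n = extN (T + 1) z n := by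
  rw [extN_eq_of_le T _ h, extN_eq_of_le (T + 1) _ (le_trans h (Nat.le_succ T))]
  rfl

lemma mw_congr (P : ℕ → U → ℕ → ℝ≥0∞) (v : ℕ → U) (i T : ℕ) {y z : ℕ → ℕ}
    (h : ∀ n ≤ T, y n = z n) : mw P v i T y = mw P v i T z := by
  unfold mw
  rw [h 0 (Nat.zero_le T)]
  congr 1
  refine Finset.prod_congr rfl fun t ht => ?_
  have ht' : t < T := Finset.mem_range.mp ht
  rw [h t ht'.le, h (t + 1) ht']

lemma mw_snoc (P : ℕ → U → ℕ → ℝ≥0∞) (v : ℕ → U) (i T : ℕ)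
    (x : Fin (T + 1) → ℕ) (j : ℕ) :
    mw P v i (T + 1) (extN (T + 1) (Fin.snoc x j))
      = mw P v i T (extN T x) * P (extN T x T) (v (extN T x T)) j := by
  unfold mw
  rw [Finset.prod_range_succ]
  have h0 : ∀ n ≤ T, extN (T + 1) (Fin.snoc x j) n = extN T x n :=
    fun n hn => extN_snoc_front T x j hn
  rw [h0 0 (Nat.zero_le T), h0 T le_rfl, extN_snoc_last]
  have : ∏ t ∈ Finset.range T, P (extN (T + 1) (Fin.snoc x j) t)
        (v (extN (T + 1) (Fin.snoc x j) t)) (extN (T + 1) (Fin.snoc x j) (t + 1))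
      = ∏ t ∈ Finset.range T, P (extN T x t) (v (extN T x t)) (extN T x (t + 1)) := by
    refine Finset.prod_congr rfl fun t ht => ?_
    have ht' : t < T := Finset.mem_range.mp ht
    rw [h0 t ht'.le, h0 (t + 1) ht']
  rw [this]
  ring

def snocE (T : ℕ) : ((Fin (T + 1) → ℕ) × ℕ) ≃ (Fin (T + 2) → ℕ) where
  toFun p := Fin.snoc p.1 p.2
  invFun z := (Fin.init z, z (Fin.last (T + 1)))
  left_inv p := by simp
  right_inv z := by simp

lemma tsum_snoc (T : ℕ) (g : (Fin (T + 2) → ℕ) → ℝ≥0∞) :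
    ∑' z : Fin (T + 2) → ℕ, g z
      = ∑' (x : Fin (T + 1) → ℕ) (j : ℕ), g (Fin.snoc x j) := by
  rw [← (snocE T).tsum_eq g]
  exact ENNReal.tsum_prod' (f := fun p : (Fin (T + 1) → ℕ) × ℕ => g (Fin.snoc p.1 p.2))


section Sums

variable (P : ℕ → U → ℕ → ℝ≥0∞) (v : ℕ → U) (i : ℕ)

lemma ext_step (hPv : ∀ k, ∑' j, P k (v k) j = 1) (T : ℕ)
    (g : (Fin (T + 1) → ℕ) → ℝ≥0∞) :
    ∑' z : Fin (T + 2) → ℕ, mw P v i (T + 1) (extN (T + 1) z) * g (Fin.init z)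
      = ∑' x : Fin (T + 1) → ℕ, mw P v i T (extN T x) * g x := by
  rw [tsum_snoc]
  refine tsum_congr fun x => ?_
  have : ∀ j : ℕ, mw P v i (T + 1) (extN (T + 1) (Fin.snoc x j))
      * g (Fin.init (α := fun _ : Fin (T + 2) => ℕ) (Fin.snoc x j))
      = mw P v i T (extN T x) * g x * P (extN T x T) (v (extN T x T)) j := by
    intro j
    rw [mw_snoc, Fin.init_snoc]
    ring
  rw [tsum_congr this, ENNReal.tsum_mul_left, hPv (extN T x T), mul_one]

lemma mass_base : ∑' x : Fin 1 → ℕ, mw P v i 0 (extN 0 x) = 1 := by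
  let e : ℕ ≃ (Fin 1 → ℕ) :=
    ⟨fun a _ => a, fun f => f 0, fun a => rfl,
      fun f => funext fun k => by rw [Subsingleton.elim k 0]⟩
  rw [← e.tsum_eq]
  have h : ∀ a : ℕ, mw P v i 0 (extN 0 (e a)) = if a = i then 1 else 0 := by
    intro a
    have h0 : extN 0 (e a) 0 = a := rfl
    simp [mw, h0]
  rw [tsum_congr h, tsum_ite_eq]

lemma mass (hPv : ∀ k, ∑' j, P k (v k) j = 1) (T : ℕ) :
    ∑' x : Fin (T + 1) → ℕ, mw P v i T (extN T x) = 1 := by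
  induction T with
  | zero => exact mass_base P v i
  | succ T ih =>
      have := ext_step P v i hPv T (fun _ => 1)
      simpa using this.trans (by simpa using ih)

variable (B : Finset ℕ)

noncomputable def Qm (T : ℕ) : ℝ≥0∞ :=
  ∑' x : Fin (T + 1) → ℕ, mw P v i T (extN T x)
    * (if ∀ t, 0 < t → t ≤ T → extN T x t ∉ (B : Set ℕ) then 1 else 0)

noncomputable def Wm (m : ℕ) : ℝ≥0∞ :=
  ∑' x : Fin (m + 1 + 1) → ℕ,
    if extN (m + 1) x (m + 1) ∈ (B : Set ℕ)
        ∧ ∀ t, 0 < t → t < m + 1 → extN (m + 1) x t ∉ (B : Set ℕ) then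
      mw P v i (m + 1) (extN (m + 1) x)
    else 0

lemma Qm_zero : Qm P v i B 0 = 1 := by
  have : ∀ x : Fin 1 → ℕ, mw P v i 0 (extN 0 x)
      * (if ∀ t, 0 < t → t ≤ 0 → extN 0 x t ∉ (B : Set ℕ) then 1 else 0)
      = mw P v i 0 (extN 0 x) := by
    intro x
    rw [if_pos (fun t ht ht0 => absurd (ht.trans_le ht0) (lt_irrefl 0)), mul_one]
  rw [Qm, tsum_congr this, mass_base]

lemma Qm_step (hPv : ∀ k, ∑' j, P k (v k) j = 1) (T : ℕ) :
    Qm P v i B T = Wm P v i B T + Qm P v i B (T + 1) := by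
  have key := ext_step P v i hPv T
    (fun x => if ∀ t, 0 < t → t ≤ T → extN T x t ∉ (B : Set ℕ) then 1 else 0)
  rw [Qm, ← key]
  have split : ∀ z : Fin (T + 2) → ℕ,
      mw P v i (T + 1) (extN (T + 1) z)
        * (if ∀ t, 0 < t → t ≤ T → extN T (Fin.init z) t ∉ (B : Set ℕ) then 1 else 0)
      = (if extN (T + 1) z (T + 1) ∈ (B : Set ℕ)
            ∧ ∀ t, 0 < t → t < T + 1 → extN (T + 1) z t ∉ (B : Set ℕ) then
          mw P v i (T + 1) (extN (T + 1) z) else 0)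
        + mw P v i (T + 1) (extN (T + 1) z)
          * (if ∀ t, 0 < t → t ≤ T + 1 → extN (T + 1) z t ∉ (B : Set ℕ) then 1 else 0) := by
    intro z
    have hagree : ∀ t, 0 < t → t ≤ T →
        (extN T (Fin.init z) t ∉ (B : Set ℕ) ↔ extN (T + 1) z t ∉ (B : Set ℕ)) := by
      intro t _ ht; rw [extN_init T z ht]
    by_cases hnh : ∀ t, 0 < t → t ≤ T → extN (T + 1) z t ∉ (B : Set ℕ)
    · have h1 : (∀ t, 0 < t → t ≤ T → extN T (Fin.init z) t ∉ (B : Set ℕ)) := by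
        intro t ht ht'; exact (hagree t ht ht').mpr (hnh t ht ht')
      rw [if_pos h1, mul_one]
      by_cases hend : extN (T + 1) z (T + 1) ∈ (B : Set ℕ)
      · rw [if_pos ⟨hend, fun t ht ht' => hnh t ht (Nat.lt_succ_iff.mp ht')⟩,
          if_neg, mul_zero, add_zero]
        intro hall
        exact hall (T + 1) (Nat.succ_pos T) le_rfl hend
      · rw [if_neg (fun hc => hend hc.1), if_pos, mul_one, zero_add]
        intro t ht ht'
        rcases Nat.lt_succ_iff_lt_or_eq.mp (Nat.lt_succ_of_le ht') with h | h
        · exact hnh t ht (Nat.lt_succ_iff.mp h)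
        · rw [h]; exact hend
    · have h1 : ¬ (∀ t, 0 < t → t ≤ T → extN T (Fin.init z) t ∉ (B : Set ℕ)) := by
        intro hall
        exact hnh fun t ht ht' => (hagree t ht ht').mp (hall t ht ht')
      rw [if_neg h1, mul_zero]
      rw [if_neg, if_neg, mul_zero, add_zero]
      · intro hall
        exact hnh fun t ht ht' => hall t ht (ht'.trans (Nat.le_succ T))
      · intro hc
        exact hnh fun t ht ht' => hc.2 t ht (Nat.lt_succ_of_le ht')
  rw [tsum_congr split, ENNReal.tsum_add]
  rfl

lemma sum_Wm_le_one (hPv : ∀ k, ∑' j, P k (v k) j = 1) :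
    ∑' m, Wm P v i B m ≤ 1 := by
  have key : ∀ N, (∑ m ∈ Finset.range N, Wm P v i B m) + Qm P v i B N = 1 := by
    intro N
    induction N with
    | zero => simpa using Qm_zero P v i B
    | succ N ih =>
        rw [Finset.sum_range_succ, add_assoc, ← Qm_step P v i B hPv N]
        exact ih
  refine Summable.tsum_le_of_sum_range_le ENNReal.summable fun N => ?_
  calc ∑ m ∈ Finset.range N, Wm P v i B m
      ≤ (∑ m ∈ Finset.range N, Wm P v i B m) + Qm P v i B N := le_self_add
    _ = 1 := key N

end Sums



lemma psi_bounded [TopologicalSpace U] [MeasurableSpace U]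
    (P : ℕ → U → ℕ → ℝ≥0∞) (c : ℕ → U → ℝ) (𝕌 : ℕ → Set U)
    (V : ℕ → ℝ≥0∞) (K : Finset ℕ) (Chat : ℝ≥0∞) (β : ℝ)
    (hM : Model P c 𝕌) (hA2a : A2a P c 𝕌 V K Chat β)
    (ψ : ℕ → ℝ≥0∞) (Mψ : ℝ≥0∞) (hMψ : Mψ ≠ ∞) (hψV : ∀ i, ψ i ≤ Mψ * V i)
    (hsub : ∀ i, ∀ u ∈ 𝕌 i, ψ i ≤ ∑' j, ψ j * P i u j) :
    ∃ D : ℝ≥0∞, D ≠ ∞ ∧ ∀ i, ψ i ≤ D := by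
  set r : ℝ≥0∞ := ENNReal.ofReal (1 - β) with hr
  have hr1 : r < 1 := by
    rw [hr, ← ENNReal.ofReal_one]
    exact ENNReal.ofReal_lt_ofReal_iff_of_nonneg (by linarith [hA2a.betaLtOne]) |>.mpr
      (by linarith [hA2a.betaPos])
  have hrne : (1 : ℝ≥0∞) - r ≠ 0 := by
    rw [ne_eq, tsub_eq_zero_iff_le]
    exact fun h => absurd hr1 (not_lt.mpr h)
  set E : ℝ≥0∞ := (1 - r)⁻¹ with hE
  have hEne : E ≠ ∞ := ENNReal.inv_ne_top.mpr hrne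
  have hw : ∀ i, (hM.nonempty i).choose ∈ 𝕌 i := fun i => (hM.nonempty i).choose_spec
  set w : ℕ → U := fun i => (hM.nonempty i).choose with hwdef
  have claim : ∀ n : ℕ, ∀ i, ψ i ≤ Mψ * r ^ n * V i
      + Mψ * Chat * (∑ k ∈ Finset.range n, r ^ k) := by
    intro n
    induction n with
    | zero => intro i; simpa using hψV i
    | succ n ih =>
        intro i
        have h1 : ψ i ≤ ∑' j, ψ j * P i (w i) j := hsub i (w i) (hw i)
        have h2 : ∑' j, ψ j * P i (w i) j
            ≤ ∑' j, (Mψ * r ^ n * V j + Mψ * Chat * (∑ k ∈ Finset.range n, r ^ k))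
              * P i (w i) j :=
          ENNReal.tsum_le_tsum fun j => mul_le_mul_left (ih j) _
        have h3 : ∑' j, (Mψ * r ^ n * V j + Mψ * Chat * (∑ k ∈ Finset.range n, r ^ k))
              * P i (w i) j
            = Mψ * r ^ n * (∑' j, V j * P i (w i) j)
              + Mψ * Chat * (∑ k ∈ Finset.range n, r ^ k) * (∑' j, P i (w i) j) := by
          rw [← ENNReal.tsum_mul_left, ← ENNReal.tsum_mul_left, ← ENNReal.tsum_add]
          exact tsum_congr fun j => by ring
        have h4 : ∑' j, V j * P i (w i) j ≤ r * V i + Chat := by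
          refine (hA2a.lyap i (w i) (hw i)).trans (add_le_add_right ?_ _)
          split_ifs
          · exact le_rfl
          · exact zero_le
        have h5 : ∑' j, P i (w i) j = 1 := hM.prob i (w i) (hw i)
        calc ψ i ≤ Mψ * r ^ n * (∑' j, V j * P i (w i) j)
              + Mψ * Chat * (∑ k ∈ Finset.range n, r ^ k) * (∑' j, P i (w i) j) :=
            h1.trans (h2.trans_eq h3)
          _ ≤ Mψ * r ^ n * (r * V i + Chat)
              + Mψ * Chat * (∑ k ∈ Finset.range n, r ^ k) := by
            rw [h5, mul_one]
            exact add_le_add_left (mul_le_mul_right h4 _) _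
          _ = Mψ * r ^ (n + 1) * V i
              + Mψ * Chat * (∑ k ∈ Finset.range (n + 1), r ^ k) := by
            rw [Finset.sum_range_succ]
            ring
  refine ⟨Mψ * Chat * E, ENNReal.mul_ne_top (ENNReal.mul_ne_top hMψ hA2a.ChatFin) hEne, ?_⟩
  intro i
  have hbd : ∀ n : ℕ, ψ i ≤ Mψ * V i * r ^ n + Mψ * Chat * E := by
    intro n
    refine (claim n i).trans (add_le_add (le_of_eq (by ring)) (mul_le_mul_right ?_ _))
    exact (ENNReal.sum_le_tsum _).trans_eq (ENNReal.tsum_geometric r)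
  have hMV : Mψ * V i ≠ ∞ := ENNReal.mul_ne_top hMψ (hA2a.Vfin i)
  have htend : Tendsto (fun n : ℕ => Mψ * V i * r ^ n + Mψ * Chat * E) atTop
      (𝓝 (Mψ * V i * 0 + Mψ * Chat * E)) := by
    exact (ENNReal.Tendsto.const_mul (ENNReal.tendsto_pow_atTop_nhds_zero_of_lt_one hr1)
      (Or.inr hMV)).add tendsto_const_nhds
  rw [mul_zero, zero_add] at htend
  exact ge_of_tendsto' htend hbd


lemma exists_min_selector [TopologicalSpace U] [MeasurableSpace U]
    (P : ℕ → U → ℕ → ℝ≥0∞) (c : ℕ → U → ℝ) (𝕌 : ℕ → Set U)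
    (hM : Model P c 𝕌) (hA1a : A1a P c 𝕌)
    (ψ : ℕ → ℝ≥0∞) (D : ℝ≥0∞) (hD : D ≠ ∞) (hψD : ∀ j, ψ j ≤ D) :
    ∃ v : ℕ → U, IsSM 𝕌 v ∧ ∀ i,
      ENNReal.ofReal (Real.exp (c i (v i))) * ∑' j, ψ j * P i (v i) j
        = minOp P c 𝕌 ψ i := by
  have key : ∀ i, ∃ u, u ∈ 𝕌 i ∧
      ENNReal.ofReal (Real.exp (c i u)) * ∑' j, ψ j * P i u j = minOp P c 𝕌 ψ i := by
    intro i
    set fR : ℕ → ℝ := fun j => (ψ j).toReal with hfR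
    have hfRb : ∃ M, ∀ j, |fR j| ≤ M := by
      refine ⟨D.toReal, fun j => ?_⟩
      rw [abs_of_nonneg ENNReal.toReal_nonneg]
      exact ENNReal.toReal_mono hD (hψD j)
    have hScont : ContinuousOn (fun u => ∑' j, fR j * (P i u j).toReal) (𝕌 i) :=
      hA1a.PCont i fR hfRb
    have hgcont : ContinuousOn
        (fun u => Real.exp (c i u) * ∑' j, fR j * (P i u j).toReal) (𝕌 i) :=
      (Real.continuous_exp.comp_continuousOn (hA1a.cCont i)).mul hScont
    obtain ⟨u0, hu0, hmin⟩ := (hM.compact i).exists_isMinOn (hM.nonempty i) hgcont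
    -- conversion between the ℝ≥0∞ functional and the real one
    have conv : ∀ u ∈ 𝕌 i,
        ENNReal.ofReal (Real.exp (c i u)) * ∑' j, ψ j * P i u j
          = ENNReal.ofReal (Real.exp (c i u) * ∑' j, fR j * (P i u j).toReal) := by
      intro u hu
      have hPfin : ∀ j, ψ j * P i u j ≠ ∞ := by
        intro j
        refine ENNReal.mul_ne_top (lt_of_le_of_lt (hψD j) (lt_top_iff_ne_top.mpr hD)).ne ?_
        exact (lt_of_le_of_lt ((ENNReal.le_tsum j).trans_eq (hM.prob i u hu))
          ENNReal.one_lt_top).ne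
      have hSfin : (∑' j, ψ j * P i u j) ≠ ∞ := by
        have hle : (∑' j, ψ j * P i u j) ≤ D := by
          calc (∑' j, ψ j * P i u j) ≤ ∑' j, D * P i u j :=
              ENNReal.tsum_le_tsum fun j => mul_le_mul_left (hψD j) _
            _ = D := by rw [ENNReal.tsum_mul_left, hM.prob i u hu, mul_one]
        exact (lt_of_le_of_lt hle (lt_top_iff_ne_top.mpr hD)).ne
      have : (∑' j, ψ j * P i u j) = ENNReal.ofReal (∑' j, fR j * (P i u j).toReal) := by
        rw [← ENNReal.ofReal_toReal hSfin]
        congr 1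
        rw [ENNReal.tsum_toReal_eq hPfin]
        exact tsum_congr fun j => by rw [ENNReal.toReal_mul]
      rw [this, ← ENNReal.ofReal_mul (Real.exp_nonneg _)]
    refine ⟨u0, hu0, ?_⟩
    rw [conv u0 hu0]
    refine le_antisymm (le_iInf fun u => ?_) ?_
    · rw [conv u.1 u.2]
      exact ENNReal.ofReal_le_ofReal (hmin u.2)
    · exact (iInf_le _ (⟨u0, hu0⟩ : 𝕌 i)).trans_eq (conv u0 hu0)
  choose v hv1 hv2 using key
  exact ⟨v, hv1, hv2⟩

/-- Lemma 2.5.  Under (A1) and (A2)(a), if `c` is not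
constant then the principal eigenvalue is strictly below `‖c‖_∞`. -/
theorem eigenvalue_lt_supCost {U : Type*} [TopologicalSpace U] [MeasurableSpace U]
    (P : ℕ → U → ℕ → ℝ≥0∞) (c : ℕ → U → ℝ) (𝕌 : ℕ → Set U) (i₀ : ℕ)
    (hM : Model P c 𝕌) (hc : ∀ i, ∀ u ∈ 𝕌 i, 0 ≤ c i u)
    (hA1a : A1a P c 𝕌) (hA1b : A1b P 𝕌 i₀)
    (V : ℕ → ℝ≥0∞) (K : Finset ℕ) (Chat : ℝ≥0∞) (β : ℝ)
    (hirr : ∀ v : ℕ → U, IsSM 𝕌 v → Irreducible P v)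
    (hA2a : A2a P c 𝕌 V K Chat β)
    (hnotconst : ¬ ∃ r : ℝ, ∀ i, ∀ u ∈ 𝕌 i, c i u = r)
    (ρ : ℝ) (hρ : 0 ≤ ρ) (ψ : ℕ → ℝ≥0∞)
    (hψpos : ∀ i, 0 < ψ i ∧ ψ i ≠ ∞)
    (hψO : ∃ M : ℝ≥0∞, M ≠ ∞ ∧ ∀ i, ψ i ≤ M * V i)
    (hψeq : ∀ i, ENNReal.ofReal (Real.exp ρ) * ψ i = minOp P c 𝕌 ψ i)
    (B : Finset ℕ) (hKB : K ⊆ B)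
    (hrep : ∀ v : ℕ → U, IsSM 𝕌 v →
      (∀ i, ENNReal.ofReal (Real.exp (c i (v i))) * ∑' j, ψ j * P i (v i) j
        = minOp P c 𝕌 ψ i) →
      ∀ i ∉ B, ψ i = hitExp P (smPolicy v) i ↑B
        (fun m x =>
          ENNReal.ofReal (Real.exp (∑ t ∈ Finset.range m, (c (x t) (v (x t)) - ρ)))
            * ψ (x m))) :
    ρ < supCost c 𝕌 := by
  by_contra hlt
  push_neg at hlt
  obtain ⟨Mc, hMcγ, hMc⟩ := hA2a.cBdd
  have hbddA : BddAbove {r : ℝ | ∃ i, ∃ u ∈ 𝕌 i, c i u = r} := by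
    refine ⟨Mc, fun r hr => ?_⟩
    obtain ⟨i, u, hu, hcu⟩ := hr
    exact hcu ▸ hMc i u hu
  have hcρ : ∀ i, ∀ u ∈ 𝕌 i, c i u ≤ ρ := fun i u hu =>
    (le_csSup hbddA ⟨i, u, hu, rfl⟩).trans hlt
  have hexpρ0 : (ENNReal.ofReal (Real.exp ρ)) ≠ 0 :=
    (ENNReal.ofReal_pos.mpr (Real.exp_pos ρ)).ne'
  have hexpρt : (ENNReal.ofReal (Real.exp ρ)) ≠ ∞ := ENNReal.ofReal_ne_top
  -- ψ is subharmonic under every admissible action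
  have hsub : ∀ i, ∀ u ∈ 𝕌 i, ψ i ≤ ∑' j, ψ j * P i u j := by
    intro i u hu
    have h1 : ENNReal.ofReal (Real.exp ρ) * ψ i
        ≤ ENNReal.ofReal (Real.exp (c i u)) * ∑' j, ψ j * P i u j := by
      rw [hψeq i, minOp]
      exact iInf_le _ (⟨u, hu⟩ : 𝕌 i)
    have h2 : ENNReal.ofReal (Real.exp (c i u)) * ∑' j, ψ j * P i u j
        ≤ ENNReal.ofReal (Real.exp ρ) * ∑' j, ψ j * P i u j :=
      mul_le_mul_left (ENNReal.ofReal_le_ofReal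
        (Real.exp_le_exp.mpr (hcρ i u hu))) _
    exact (ENNReal.mul_le_mul_iff_right hexpρ0 hexpρt).mp (h1.trans h2)
  obtain ⟨Mψ, hMψ, hψV⟩ := hψO
  obtain ⟨D, hD, hψD⟩ := psi_bounded P c 𝕌 V K Chat β hM hA2a ψ Mψ hMψ hψV hsub
  obtain ⟨v, hvSM, hvmin⟩ := exists_min_selector P c 𝕌 hM hA1a ψ D hD hψD
  have hPv : ∀ k, ∑' j, P k (v k) j = 1 := fun k => hM.prob k (v k) (hvSM k)
  rcases B.eq_empty_or_nonempty with hBe | hBne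
  · -- if `B` were empty the representation would force `ψ ≡ 0`
    have h := hrep v hvSM hvmin 0 (by rw [hBe]; exact Finset.notMem_empty 0)
    rw [hBe] at h
    simp only [hitExp, Finset.coe_empty, Set.mem_empty_iff_false, false_and, if_false,
      tsum_zero] at h
    exact absurd h (hψpos 0).1.ne'
  · obtain ⟨istar, hiB, hmax⟩ := B.exists_max_image ψ hBne
    set m := ψ istar with hm
    have hm0 : m ≠ 0 := (hψpos istar).1.ne'
    have hmt : m ≠ ∞ := (hψpos istar).2
    -- ψ is globally bounded by its maximum over B
    have hψm : ∀ i, ψ i ≤ m := by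
      intro i
      by_cases hiB2 : i ∈ B
      · exact hmax i hiB2
      · rw [hrep v hvSM hvmin i hiB2, hitExp]
        refine le_trans (?_ : _ ≤ ∑' m' : ℕ, m * Wm P v i B m')
          (le_trans (le_of_eq ENNReal.tsum_mul_left)
            (le_trans (mul_le_mul_right (sum_Wm_le_one P v i B hPv) m)
              (le_of_eq (mul_one m))))
        refine ENNReal.tsum_le_tsum fun m' => ?_
        rw [Wm, ← ENNReal.tsum_mul_left]
        by_cases dummy : True
        case neg => exact absurd trivial dummy
        case pos =>
              refine ENNReal.tsum_le_tsum fun x => ?_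
              split_ifs with hcnd
              · rw [pathWeight_sm, mul_comm m _]
                refine mul_le_mul_right ?_ _
                have h1 : ENNReal.ofReal (Real.exp (∑ t ∈ Finset.range (m' + 1),
                    (c (extN (m' + 1) x t) (v (extN (m' + 1) x t)) - ρ))) ≤ 1 := by
                  rw [← ENNReal.ofReal_one, ← Real.exp_zero]
                  refine ENNReal.ofReal_le_ofReal (Real.exp_le_exp.mpr ?_)
                  refine Finset.sum_nonpos fun t _ => ?_
                  have := hcρ (extN (m' + 1) x t) (v (extN (m' + 1) x t))
                    (hvSM (extN (m' + 1) x t))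
                  linarith
                have h2 : ψ (extN (m' + 1) x (m' + 1)) ≤ m := hmax _ hcnd.1
                exact le_trans (mul_le_mul' h1 h2) (le_of_eq (one_mul m))
              · simp
    -- maximum principle: the maximum propagates through positive transitions
    have hprop : ∀ i, ψ i = m → ∀ u ∈ 𝕌 i, ∀ j0, P i u j0 ≠ 0 → ψ j0 = m := by
      intro i hi u hu j0 hj0
      by_contra hne
      have hjlt : ψ j0 < m := lt_of_le_of_ne (hψm j0) hne
      have hS : m ≤ ∑' j, ψ j * P i u j := hi ▸ hsub i u hu
      have hp1 : P i u j0 ≤ 1 := (ENNReal.le_tsum j0).trans_eq (hM.prob i u hu)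
      have hpt : P i u j0 ≠ ∞ := (hp1.trans_lt ENNReal.one_lt_top).ne
      have mysplit : ∀ f : ℕ → ℝ≥0∞,
          ∑' x, f x = f j0 + ∑' x, if x = j0 then 0 else f x := by
        intro f
        rw [ENNReal.tsum_eq_add_tsum_ite j0]
        congr 1
        exact tsum_congr fun x => by split_ifs <;> rfl
      have hrest : P i u j0 + (∑' j, if j = j0 then 0 else P i u j) = 1 := by
        rw [← mysplit (P i u)]
        exact hM.prob i u hu
      have hrest1 : (∑' j, if j = j0 then 0 else P i u j) ≤ 1 :=
        hrest ▸ le_add_self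
      have hrt : m * (∑' j, if j = j0 then 0 else P i u j) ≠ ∞ :=
        ENNReal.mul_ne_top hmt (hrest1.trans_lt ENNReal.one_lt_top).ne
      have hb : (∑' j, if j = j0 then 0 else ψ j * P i u j)
          ≤ m * ∑' j, (if j = j0 then 0 else P i u j) := by
        rw [← ENNReal.tsum_mul_left]
        refine ENNReal.tsum_le_tsum fun j => ?_
        split_ifs
        · simp
        · exact mul_le_mul_left (hψm j) _
      have hstrict : ψ j0 * P i u j0 < m * P i u j0 :=
        ENNReal.mul_lt_mul_left hj0 hpt hjlt
      have hSlt : (∑' j, ψ j * P i u j) < m := by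
        calc (∑' j, ψ j * P i u j)
            = ψ j0 * P i u j0 + ∑' j, if j = j0 then 0 else ψ j * P i u j :=
              mysplit fun j => ψ j * P i u j
          _ ≤ ψ j0 * P i u j0 + m * ∑' j, (if j = j0 then 0 else P i u j) :=
              add_le_add_right hb _
          _ < m * P i u j0 + m * ∑' j, (if j = j0 then 0 else P i u j) :=
              ENNReal.add_lt_add_right hrt hstrict
          _ = m * (P i u j0 + ∑' j, (if j = j0 then 0 else P i u j)) :=
              (mul_add m _ _).symm
          _ = m := by rw [hrest, mul_one]
      exact absurd hS (not_le.mpr hSlt)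
    -- by irreducibility, ψ is constant equal to m
    have hconst : ∀ j, ψ j = m := by
      intro j
      by_cases hj : j = istar
      · rw [hj]
      · obtain ⟨n, hn, x, hx0, hxn, hpos⟩ := hirr v hvSM istar j fun h => hj h.symm
        have hstep : ∀ t, t ≤ n → ψ (x t) = m := by
          intro t
          induction t with
          | zero => intro _; rw [hx0]
          | succ t ih =>
              intro ht
              exact hprop (x t) (ih (Nat.le_of_succ_le ht)) (v (x t)) (hvSM (x t))
                (x (t + 1)) (hpos t (Nat.lt_of_succ_le ht)).ne'
        rw [← hxn]
        exact hstep n le_rfl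
    -- hence c is constant equal to ρ, a contradiction
    have hcall : ∀ i, ∀ u ∈ 𝕌 i, c i u = ρ := by
      intro i u hu
      have hSm : (∑' j, ψ j * P i u j) = m := by
        rw [tsum_congr (fun j => by rw [hconst j])]
        rw [ENNReal.tsum_mul_left, hM.prob i u hu, mul_one]
      have h1 : ENNReal.ofReal (Real.exp ρ) * m
          ≤ ENNReal.ofReal (Real.exp (c i u)) * m := by
        have heq := hψeq i
        rw [hconst i] at heq
        rw [heq, minOp]
        refine (iInf_le _ (⟨u, hu⟩ : 𝕌 i)).trans_eq ?_
        rw [hSm]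
      have h2 : Real.exp ρ ≤ Real.exp (c i u) := by
        have := (ENNReal.mul_le_mul_iff_left hm0 hmt).mp h1
        rwa [ENNReal.ofReal_le_ofReal_iff (Real.exp_nonneg _)] at this
      exact le_antisymm (hcρ i u hu) (Real.exp_le_exp.mp h2)
    exact hnotconst ⟨ρ, hcall⟩

end RSDT
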